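/- Let V be an n-dimensional vector space and E a q-dimensional vector space with basis f₁, …, f_q. Let 0 < a < n. Suppose g ∈ GL(V ⊗ E), written as a q×q block matrix (g_{ij}) with g_{ij} ∈ End(V) relative to the decomposition V ⊗ E = ⊕ᵢ V ⊗ ℂfᵢ, has the property: for all subspaces U₁, …, U_q ⊆ V of dimension a, there exist subspaces V₁, …, V_q ⊆ V of dimension a with g·(U₁⊗ℂf₁ ⊕ ⋯ ⊕ U_q⊗ℂf_q) = V₁⊗ℂf₁ ⊕ ⋯ ⊕ V_q⊗ℂf_q. Then g is a monomial matrix: there is a permutation σ of {1,…,q} such that g_{ij} = 0 unless i = σ(j), and each g_{σ(j),j} ∈ GL(V). -/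

import Mathlib

/-!
Projecting `g (U₁ ⊗ f₁ ⊕ ⋯ ⊕ U_q ⊗ f_q)` to the `i`-th factor shows that `∑ⱼ g_{ij}(Uⱼ)` has
dimension exactly `a` for every choice of `a`-dimensional `Uⱼ`. Surjectivity of `g` makes the
ranges of the row `(g_{ij})ⱼ` span `V`, and `a < n` then forces some `g_{im}` to have rank `> a`.
If another entry `g_{im'}` were nonzero, say `s = g_{im'} w ≠ 0`, one could choose `U_m` whose
image contains an `a`-dimensional subspace avoiding `s` and `U_{m'} ∋ w`, giving a sum of dimension
`a + 1`. So every row has a single nonzero entry; injectivity of `g` makes every column nonzero,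
so the position of that entry is a permutation, and each surviving entry is surjective.
-/

open Module

noncomputable def blockMap {V : Type} [AddCommGroup V] [Module ℂ V] {q : ℕ}
    (g : Fin q → Fin q → (V →ₗ[ℂ] V)) : (Fin q → V) →ₗ[ℂ] (Fin q → V) :=
  LinearMap.pi fun i => ∑ j, (g i j).comp (LinearMap.proj j)

namespace Submodule

variable {K V W : Type*} [Field K] [AddCommGroup V] [Module K V] [FiniteDimensional K V]
  [AddCommGroup W] [Module K W]

theorem exists_le_finrank_eq {U₀ : Submodule K V} {k : ℕ} (h₀ : finrank K U₀ ≤ k)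
    (hk : k ≤ finrank K V) : ∃ U, U₀ ≤ U ∧ finrank K U = k := by
  induction k, h₀ using Nat.le_induction with
  | base => exact ⟨U₀, le_rfl, rfl⟩
  | succ k _ ih =>
    obtain ⟨U, hU₀, hU⟩ := ih (by omega)
    obtain ⟨v, hv⟩ := U.exists_of_finrank_lt (by omega)
    have hvU : v ∉ U := by simpa using hv 1 one_ne_zero
    exact ⟨U ⊔ span K {v}, hU₀.trans le_sup_left, by rw [finrank_sup_span_singleton hvU, hU]⟩

theorem exists_le_finrank_eq_of_le_finrank {R : Submodule K V} {k : ℕ} (hk : k ≤ finrank K R) :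
    ∃ B ≤ R, finrank K B = k := by
  obtain ⟨B, -, hB⟩ := exists_le_finrank_eq (U₀ := (⊥ : Submodule K R)) (by simp) hk
  exact ⟨B.map R.subtype, map_subtype_le R B, by rw [finrank_map_subtype_eq, hB]⟩

theorem exists_le_finrank_eq_notMem {R : Submodule K V} {s : V} (hs : s ≠ 0) {k : ℕ}
    (hk : k < finrank K R) : ∃ B ≤ R, finrank K B = k ∧ s ∉ B := by
  obtain ⟨H, hH⟩ := (span K {s}).exists_isCompl
  have hRH : k ≤ finrank K ↥(R ⊓ H) := by
    have h₁ := finrank_sup_add_finrank_inf_eq R H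
    have h₂ := finrank_add_eq_of_isCompl hH
    rw [finrank_span_singleton hs] at h₂
    have h₃ := finrank_le (R ⊔ H)
    omega
  obtain ⟨B, hBRH, hB⟩ := exists_le_finrank_eq_of_le_finrank hRH
  refine ⟨B, hBRH.trans inf_le_left, hB, fun hsB => hs ?_⟩
  exact disjoint_def.1 hH.disjoint s (mem_span_singleton_self s)
    (inf_le_right (a := R) (hBRH hsB))

theorem exists_finrank_eq_le_map (T : V →ₗ[K] W) {B : Submodule K W} (hB : B ≤ LinearMap.range T)
    {k : ℕ} (hBk : finrank K B ≤ k) (hk : k ≤ finrank K V) :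
    ∃ U : Submodule K V, finrank K U = k ∧ B ≤ U.map T := by
  have : FiniteDimensional K B := finiteDimensional_of_le hB
  let b := Module.finBasis K B
  choose u hu using fun j => hB (b j).2
  have hU₀ : finrank K (span K (Set.range u)) ≤ k :=
    (finrank_range_le_card u).trans (by simpa using hBk)
  obtain ⟨U, hU₀U, hU⟩ := exists_le_finrank_eq hU₀ hk
  refine ⟨U, hU, le_trans ?_ (map_mono hU₀U)⟩
  have hTu : T ∘ u = B.subtype ∘ b := funext hu
  rw [map_span, ← Set.range_comp, hTu, Set.range_comp, ← map_span, b.span_eq, map_subtype_top]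

theorem map_proj_pi_univ {R ι : Type*} {φ : ι → Type*} [Semiring R]
    [∀ i, AddCommMonoid (φ i)] [∀ i, Module R (φ i)] (p : ∀ i, Submodule R (φ i)) (i : ι) :
    (pi Set.univ p).map (LinearMap.proj i) = p i := by
  classical
  refine le_antisymm (map_le_iff_le_comap.2 fun x hx => hx i trivial) fun x hx => ?_
  exact ⟨Pi.single i x, le_comap_single_pi p hx, by simp⟩

end Submodule

namespace LinearMap

variable {K V W ι : Type*} [Field K] [AddCommGroup V] [Module K V] [AddCommGroup W] [Module K W]
  {f : ι → V →ₗ[K] W} {a : ℕ}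

theorem range_eq_top_of_forall_ne_eq_zero (hf : ⨆ j, range (f j) = ⊤) {m : ι}
    (hm : ∀ j ≠ m, f j = 0) : range (f m) = ⊤ := by
  refine eq_top_iff.2 (hf ▸ iSup_le fun j => ?_)
  obtain rfl | hj := eq_or_ne j m
  · exact le_rfl
  · simp [hm j hj]

variable [FiniteDimensional K V]

theorem exists_lt_finrank_range
    (hf : ∀ U : ι → Submodule K V, (∀ j, finrank K (U j) = a) →
      finrank K ↥(⨆ j, (U j).map (f j)) = a)
    (htop : ⨆ j, range (f j) = ⊤) (haV : a ≤ finrank K V) (haW : a < finrank K W) :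
    ∃ m, a < finrank K (range (f m)) := by
  by_contra! hle
  choose U hUa hUf using fun j =>
    Submodule.exists_finrank_eq_le_map (f j) le_rfl (hle j) haV
  have htop' : ⨆ j, (U j).map (f j) = ⊤ := eq_top_iff.2 (htop ▸ iSup_mono hUf)
  have := hf U hUa
  rw [htop', finrank_top] at this
  omega

theorem eq_zero_of_lt_finrank_range
    (hf : ∀ U : ι → Submodule K V, (∀ j, finrank K (U j) = a) →
      finrank K ↥(⨆ j, (U j).map (f j)) = a)
    [FiniteDimensional K W] (ha : 0 < a) (haV : a ≤ finrank K V) {m m' : ι}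
    (hm : a < finrank K (range (f m))) (hm' : m' ≠ m) : f m' = 0 := by
  classical
  by_contra! hne
  obtain ⟨w, hw⟩ : ∃ w, f m' w ≠ 0 := by simpa [DFunLike.ne_iff] using hne
  obtain ⟨B, hBm, hB, hwB⟩ := Submodule.exists_le_finrank_eq_notMem hw hm
  obtain ⟨Um, hUm, hBUm⟩ := Submodule.exists_finrank_eq_le_map (f m) hBm hB.le haV
  obtain ⟨Um', hUm', hwUm'⟩ := Submodule.exists_finrank_eq_le_map (f m')
    (Submodule.span_singleton_le_iff_mem _ _ |>.2 (mem_range_self _ w))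
    (by rwa [finrank_span_singleton hw]) haV
  let U := Function.update (fun _ => Um') m Um
  have hUa : ∀ j, finrank K (U j) = a :=
    (Function.forall_update_iff _ fun _ (P : Submodule K V) => finrank K P = a).2
      ⟨hUm, fun _ _ => hUm'⟩
  have hle : B ⊔ Submodule.span K {f m' w} ≤ ⨆ j, (U j).map (f j) := by
    refine sup_le (le_iSup_of_le m ?_) (le_iSup_of_le m' ?_)
    · simpa [U] using hBUm
    · simpa [U, hm'] using hwUm'
  have := Submodule.finrank_mono hle
  rw [Submodule.finrank_sup_span_singleton hwB, hf U hUa, hB] at this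
  omega

end LinearMap

section blockMap

variable {V : Type} [AddCommGroup V] [Module ℂ V] {q : ℕ} (g : Fin q → Fin q → (V →ₗ[ℂ] V))

theorem proj_comp_blockMap_comp_single (i j : Fin q) :
    LinearMap.proj i ∘ₗ blockMap g ∘ₗ LinearMap.single ℂ (fun _ => V) j = g i j := by
  ext v
  simp [blockMap, Pi.single_apply, apply_ite (g i _)]

theorem map_proj_map_blockMap_pi (U : Fin q → Submodule ℂ V) (i : Fin q) :
    ((Submodule.pi Set.univ U).map (blockMap g)).map (LinearMap.proj i) =
      ⨆ j, (U j).map (g i j) := by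
  classical
  simp only [← Submodule.iSup_map_single, Submodule.map_iSup, Submodule.map_comp,
    ← proj_comp_blockMap_comp_single g i]

theorem iSup_range_eq_top_of_blockMap_surjective (hg : Function.Surjective (blockMap g))
    (i : Fin q) : ⨆ j, LinearMap.range (g i j) = ⊤ := by
  have := map_proj_map_blockMap_pi g (fun _ => ⊤) i
  simp only [Submodule.pi_top, Submodule.map_top, LinearMap.range_eq_top.2 hg] at this
  rw [← this, LinearMap.range_eq_top.2 (LinearMap.proj_surjective i)]

theorem exists_ne_zero_of_blockMap_injective [Nontrivial V] (hg : Function.Injective (blockMap g))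
    (j : Fin q) : ∃ i, g i j ≠ 0 := by
  by_contra! hcol
  obtain ⟨v, hv⟩ := exists_ne (0 : V)
  have : blockMap g (Pi.single j v) = 0 := funext fun i => by
    simpa [hcol i] using congr($(proj_comp_blockMap_comp_single g i j) v)
  exact hv (by simpa using hg (this.trans (map_zero _).symm))

end blockMap

theorem stmt_5_general (V : Type) [AddCommGroup V] [Module ℂ V] [FiniteDimensional ℂ V]
    (n : ℕ) (hn : finrank ℂ V = n) (a : ℕ) (ha : 0 < a) (han : a < n)
    (q : ℕ) (g : Fin q → Fin q → (V →ₗ[ℂ] V))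
    (hbij : Function.Bijective (blockMap g))
    (hstab : ∀ U : Fin q → Submodule ℂ V, (∀ i, finrank ℂ (U i) = a) →
      ∃ W : Fin q → Submodule ℂ V, (∀ i, finrank ℂ (W i) = a) ∧
        (Submodule.pi Set.univ U).map (blockMap g) = Submodule.pi Set.univ W) :
    ∃ σ : Equiv.Perm (Fin q),
      (∀ i j, i ≠ σ j → g i j = 0) ∧ (∀ j, Function.Bijective (g (σ j) j)) := by
  subst hn
  have hrow : ∀ i (U : Fin q → Submodule ℂ V), (∀ j, finrank ℂ (U j) = a) →
      finrank ℂ ↥(⨆ j, (U j).map (g i j)) = a := fun i U hU => by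
    obtain ⟨W, hW, hUW⟩ := hstab U hU
    rw [← map_proj_map_blockMap_pi, hUW, Submodule.map_proj_pi_univ, hW]
  have htop := iSup_range_eq_top_of_blockMap_surjective g hbij.2
  choose ρ hρ using fun i => LinearMap.exists_lt_finrank_range (hrow i) (htop i) han.le han
  have hzero : ∀ i j, j ≠ ρ i → g i j = 0 := fun i j =>
    LinearMap.eq_zero_of_lt_finrank_range (hrow i) ha han.le (hρ i)
  have : Nontrivial V := Module.nontrivial_of_finrank_pos (ha.trans han)
  have hρ_surj : Function.Surjective ρ := fun j => by
    obtain ⟨i, hi⟩ := exists_ne_zero_of_blockMap_injective g hbij.1 j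
    exact ⟨i, (not_imp_comm.1 (hzero i j) hi).symm⟩
  let e := Equiv.ofBijective ρ ⟨Finite.injective_iff_surjective.2 hρ_surj, hρ_surj⟩
  refine ⟨e.symm, fun i j hij => hzero i j fun h => hij ?_, fun j => ?_⟩
  · exact (e.symm_apply_eq.2 h).symm
  · have hsurj : Function.Surjective (g (e.symm j) j) :=
      LinearMap.range_eq_top.1 <| LinearMap.range_eq_top_of_forall_ne_eq_zero (htop _)
        fun k hk => hzero _ k (by rwa [show ρ (e.symm j) = j from e.apply_symm_apply j])
    exact ⟨LinearMap.injective_iff_surjective.2 hsurj, hsurj⟩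

/-- If an invertible block matrix `g = (g_{ij})` on `V ⊗ E ≅ V^q` maps every
subspace of the form `U₁ ⊗ ℂf₁ ⊕ ⋯ ⊕ U_q ⊗ ℂf_q` (with `dim Uᵢ = a`,
`0 < a < dim V`) to a subspace of the same form, then `g` is a monomial matrix:
there is a permutation `σ` with `g_{ij} = 0` unless `i = σ(j)`, and each
`g_{σ(j) j}` invertible. -/
theorem stmt_5 (V : Type) [AddCommGroup V] [Module ℂ V] [FiniteDimensional ℂ V]
    (n : ℕ) (hn : finrank ℂ V = n) (a : ℕ) (ha : 0 < a) (han : a < n)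
    (q : ℕ) (hq : 0 < q) (g : Fin q → Fin q → (V →ₗ[ℂ] V))
    (hbij : Function.Bijective (blockMap g))
    (hstab : ∀ U : Fin q → Submodule ℂ V, (∀ i, finrank ℂ (U i) = a) →
      ∃ W : Fin q → Submodule ℂ V, (∀ i, finrank ℂ (W i) = a) ∧
        (Submodule.pi Set.univ U).map (blockMap g) = Submodule.pi Set.univ W) :
    ∃ σ : Equiv.Perm (Fin q),
      (∀ i j, i ≠ σ j → g i j = 0) ∧ (∀ j, Function.Bijective (g (σ j) j)) :=
  stmt_5_general V n hn a ha han q g hbij hstab
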